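/- arXiv:1808.08487 — 3 statements merged into one kernel-verified Lean document; each statement's English description precedes it below -/
import Mathlib

section
/- Let m ≥ 2, 1 ≤ ℓ ≤ m, and let (f_1, …, f_ℓ) be a (2m, ℓ) bent vectorial function on GF(2^{2m}). Then the supports of the codewords of Hamming weight 2^{2m−1} + 2^{m−1} of C(f_1, …, f_ℓ) hold a 2-design: for every two distinct elements x, y of GF(2^{2m}), the number of codewords c of C(f_1, …, f_ℓ) of Hamming weight 2^{2m−1} + 2^{m−1} with c_x = c_y = 1 is exactly (2^ℓ − 1)(2^{2m−2} + 2^{m−1}). -/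
noncomputable section

/-- The finite field `GF(2^n)` is finite. -/
instance (n : ℕ) : Fintype (GaloisField 2 n) := Fintype.ofFinite _

/-- The absolute trace map from `GF(2^(2m))` to `GF(2)`. -/
def tr (m : ℕ) (x : GaloisField 2 (2*m)) : ZMod 2 :=
  Algebra.trace (ZMod 2) (GaloisField 2 (2*m)) x

/-- A Boolean function `f : GF(2^(2m)) → GF(2)` is bent if all its Walsh
transform values have absolute value `2^m`. -/
def IsBent (m : ℕ) (f : GaloisField 2 (2*m) → ZMod 2) : Prop :=
  ∀ w : GaloisField 2 (2*m),
    |∑ x : GaloisField 2 (2*m), (-1 : ℤ) ^ ((f x + tr m (w * x)).val)| = 2 ^ m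

/-- A tuple `(f 0, …, f (ℓ-1))` of Boolean functions on `GF(2^(2m))` is a
`(2m, ℓ)` bent vectorial function if every nonzero `GF(2)`-linear combination
of the `f j` is bent. -/
def IsBentVectorial (m ℓ : ℕ) (f : Fin ℓ → GaloisField 2 (2*m) → ZMod 2) : Prop :=
  ∀ a : Fin ℓ → ZMod 2, a ≠ 0 → IsBent m (fun x => ∑ j, a j * f j x)

/-- The binary linear code `C(f 0, …, f (ℓ-1))` of length `2^(2m)` (with
coordinates indexed by `GF(2^(2m))`, a codeword being a function
`GF(2^(2m)) → GF(2)`, i.e. the truth table of a Boolean function), spanned by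
the truth tables of the `f j`, the truth tables of the linear functions
`x ↦ tr (w * x)` for all `w`, and the all-one vector. -/
def code (m ℓ : ℕ) (f : Fin ℓ → GaloisField 2 (2*m) → ZMod 2) :
    Submodule (ZMod 2) (GaloisField 2 (2*m) → ZMod 2) :=
  Submodule.span (ZMod 2)
    (Set.range f ∪ Set.range (fun w => fun x => tr m (w * x)) ∪ {fun _ => (1 : ZMod 2)})

/-- The Hamming weight of a codeword: the number of nonzero coordinates. -/
def wt (m : ℕ) (c : GaloisField 2 (2*m) → ZMod 2) : ℕ :=
  {x | c x ≠ 0}.ncard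

/-- The support of a codeword: the set of coordinates where it is nonzero. -/
def supp (m : ℕ) (c : GaloisField 2 (2*m) → ZMod 2) : Set (GaloisField 2 (2*m)) :=
  {x | c x ≠ 0}

/-!
Parametrise the code by `(a, w, ε) ↦ f_a + Tr (w ·) + ε` with `f_a = ∑ a_j f_j`. This is
injective because no nonzero `f_a` is affine: an affine function has a Walsh coefficient of
absolute value `2^(2m)`, whereas all those of the bent `f_a` are `±2^m`.

A codeword `c` has weight `2^(2m-1) + 2^(m-1)` iff `∑ (-1)^c = -2^m`, i.e. iff
`(-1)^ε W_{f_a}(w) = -2^m`, which is impossible for `a = 0`. For `a ≠ 0` every condition on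
`(w, ε)` has an indicator that is affine in a `±1` quantity, so `2^(m+3)` times the number of
blocks through `x ≠ y` is `∑_{w,ε} (2^m - (-1)^ε W(w)) (1 - (-1)^{c(x)}) (1 - (-1)^{c(y)})`.
Walsh inversion `∑_w W(w) (-1)^{f(x) + Tr (w x)} = 2^(2m)` and orthogonality of the
characters `w ↦ (-1)^{Tr (w (x + y))}` evaluate it to `2^(m+3) (2^(2m-2) + 2^(m-1))`, once for
each of the `2^ℓ - 1` nonzero `a`.
-/

open Finset

lemma ncard_setOf_mem_range_and {α β : Type*} {φ : α → β} (hφ : Function.Injective φ)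
    (P : β → Prop) : {c | c ∈ Set.range φ ∧ P c}.ncard = {p | P (φ p)}.ncard :=
  (Set.ncard_preimage_of_injective_subset_range hφ fun _ hc => hc.1).symm.trans
    (by congr 1; ext p; simp)

lemma ncard_setOf_prod {α β : Type*} [Fintype α] [Fintype β] (P : α × β → Prop) :
    {p | P p}.ncard = ∑ a, {b | P (a, b)}.ncard := by
  classical
  simp_rw [Set.ncard_eq_toFinset_card', Set.toFinset_ofPred, card_filter, Fintype.sum_prod_type]

def signChar : AddChar (ZMod 2) ℤ := AddChar.zmodChar 2 (by norm_num : (-1 : ℤ) ^ 2 = 1)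

lemma signChar_zero : signChar 0 = 1 := rfl

lemma signChar_one : signChar 1 = -1 := rfl

lemma signChar_eq_ite (v : ZMod 2) : signChar v = if v = 0 then 1 else -1 := by
  fin_cases v <;> rfl

lemma abs_signChar (v : ZMod 2) : |signChar v| = 1 := by
  rw [signChar_eq_ite]; split_ifs <;> rfl

lemma ite_eq_one_sub_signChar (v : ZMod 2) : (if v = 1 then 2 else 0 : ℤ) = 1 - signChar v := by
  fin_cases v <;> rfl

lemma ite_eq_sub_of_eq_or_eq_neg {s W : ℤ} (hs : s ≠ 0) (hW : W = s ∨ W = -s) :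
    (if W = -s then 2 * s else 0) = s - W := by
  rcases hW with rfl | rfl
  · rw [if_neg (by omega), sub_self]
  · rw [if_pos rfl]; ring

lemma sum_zmod_two {M : Type*} [AddCommMonoid M] (h : ZMod 2 → M) : ∑ v, h v = h 0 + h 1 :=
  Fin.sum_univ_two h

section Weight

variable {α : Type*} [Fintype α]

lemma sum_signChar_eq_card_sub (c : α → ZMod 2) :
    ∑ z, signChar (c z) = Fintype.card α - 2 * {z | c z ≠ 0}.ncard := by
  classical
  rw [Set.ncard_eq_toFinset_card', ← card_univ,
    ← card_filter_add_card_filter_not (s := univ) (fun z => c z = 0)]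
  simp_rw [signChar_eq_ite, sum_ite, sum_const]
  simp
  ring

lemma ncard_support_eq_iff {c : α → ZMod 2} {k s : ℕ} (hk : 2 * k = Fintype.card α + s) :
    {z | c z ≠ 0}.ncard = k ↔ ∑ z, signChar (c z) = -s := by
  rw [sum_signChar_eq_card_sub]
  omega

end Weight

section Walsh

variable {L : Type*} [Field L] [Algebra (ZMod 2) L]

local notation "Tr" => Algebra.trace (ZMod 2) L

def traceChar : AddChar L ℤ :=
  signChar.compAddMonoidHom (Algebra.trace (ZMod 2) L).toAddMonoidHom

lemma traceChar_apply (z : L) : traceChar z = signChar (Tr z) := rfl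

variable [Fintype L]

lemma traceChar_isPrimitive : (traceChar (L := L)).IsPrimitive := by
  refine AddChar.IsPrimitive.of_ne_one fun h => ?_
  obtain ⟨z, hz⟩ := Algebra.trace_surjective (ZMod 2) L 1
  have := DFunLike.congr_fun h z
  rw [traceChar_apply, hz, AddChar.one_apply, signChar_one] at this
  norm_num at this

lemma sum_traceChar_mul [DecidableEq L] (t : L) :
    ∑ w, traceChar (w * t) = if t = 0 then (Fintype.card L : ℤ) else 0 := by
  rw [AddChar.sum_mulShift t traceChar_isPrimitive]
  push_cast
  rfl

def walsh (g : L → ZMod 2) (w : L) : ℤ := ∑ z, signChar (g z + Tr (w * z))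

lemma sum_signChar_add (g : L → ZMod 2) (w : L) (ε : ZMod 2) :
    ∑ z, signChar (g z + Tr (w * z) + ε) = signChar ε * walsh g w := by
  simp_rw [AddChar.map_add_eq_mul _ _ ε, walsh, mul_sum, mul_comm]

lemma sum_signChar_mul_signChar [DecidableEq L] (g : L → ZMod 2) (x y : L) :
    ∑ w, signChar (g x + Tr (w * x)) * signChar (g y + Tr (w * y)) =
      if x = y then (Fintype.card L : ℤ) else 0 := by
  have : CharP L 2 := charP_of_injective_algebraMap (algebraMap (ZMod 2) L).injective 2
  have hprod : ∀ w, signChar (g x + Tr (w * x)) * signChar (g y + Tr (w * y)) =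
      signChar (g x + g y) * traceChar (w * (x + y)) := fun w => by
    rw [traceChar_apply, ← AddChar.map_add_eq_mul, ← AddChar.map_add_eq_mul, mul_add,
      LinearMap.map_add]
    abel_nf
  simp_rw [hprod, ← mul_sum, sum_traceChar_mul, CharTwo.add_eq_zero]
  split_ifs with h
  · rw [h, CharTwo.add_self_eq_zero, AddChar.map_zero_eq_one, one_mul]
  · rw [mul_zero]

lemma sum_walsh_mul_signChar (g : L → ZMod 2) (x : L) :
    ∑ w, walsh g w * signChar (g x + Tr (w * x)) = Fintype.card L := by
  classical
  simp_rw [walsh, sum_mul]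
  rw [sum_comm]
  simp [sum_signChar_mul_signChar]

lemma walsh_zero [DecidableEq L] (w : L) :
    walsh (fun _ => 0) w = if w = 0 then (Fintype.card L : ℤ) else 0 := by
  simp_rw [walsh, zero_add, mul_comm w]
  exact sum_traceChar_mul w

lemma abs_walsh_of_forall_add_eq {g : L → ZMod 2} {w : L} {ε : ZMod 2}
    (h : ∀ z, g z + Tr (w * z) = ε) : |walsh g w| = Fintype.card L := by
  simp_rw [walsh, h, sum_const, card_univ, nsmul_eq_mul, abs_mul, Nat.abs_cast]
  rw [abs_signChar, mul_one]

end Walsh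

section Design

variable {L : Type*} [Field L] [Fintype L] [Algebra (ZMod 2) L]

local notation "Tr" => Algebra.trace (ZMod 2) L

def designCount (g : L → ZMod 2) (k : ℕ) (x y : L) : ℕ :=
  {q : L × ZMod 2 | {z | g z + Tr (q.1 * z) + q.2 ≠ 0}.ncard = k ∧
    g x + Tr (q.1 * x) + q.2 = 1 ∧ g y + Tr (q.1 * y) + q.2 = 1}.ncard

lemma designCount_zero {k s : ℕ} (hs : 0 < s) (hsq : s < Fintype.card L)
    (hk : 2 * k = Fintype.card L + s) (x y : L) : designCount (fun _ => 0) k x y = 0 := by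
  classical
  rw [designCount, Set.ncard_eq_zero, Set.eq_empty_iff_forall_notMem]
  rintro ⟨w, ε⟩ ⟨hwt, -⟩
  rw [ncard_support_eq_iff hk, sum_signChar_add, walsh_zero] at hwt
  have habs := congrArg abs hwt
  rw [abs_mul, abs_signChar, one_mul, abs_neg, Nat.abs_cast] at habs
  split_ifs at habs <;> simp at habs <;> omega

lemma sum_walsh_indicator_product (g : L → ZMod 2) (s : ℤ) {x y : L} (hxy : x ≠ y) :
    ∑ q : L × ZMod 2, (s - signChar q.2 * walsh g q.1) *
      (1 - signChar (g x + Tr (q.1 * x) + q.2)) * (1 - signChar (g y + Tr (q.1 * y) + q.2)) =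
      2 * Fintype.card L * (s + 2) := by
  classical
  have hinner : ∀ w, ∑ ε : ZMod 2, (s - signChar ε * walsh g w) *
      (1 - signChar (g x + Tr (w * x) + ε)) * (1 - signChar (g y + Tr (w * y) + ε)) =
      2 * s + 2 * s * (signChar (g x + Tr (w * x)) * signChar (g y + Tr (w * y))) +
        2 * (walsh g w * signChar (g x + Tr (w * x))) +
        2 * (walsh g w * signChar (g y + Tr (w * y))) := fun w => by
    rw [sum_zmod_two]
    simp only [AddChar.map_add_eq_mul, signChar_zero, signChar_one]
    ring
  rw [Fintype.sum_prod_type]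
  simp_rw [hinner, sum_add_distrib, ← mul_sum, sum_const, card_univ, sum_signChar_mul_signChar,
    if_neg hxy, sum_walsh_mul_signChar]
  ring

lemma four_mul_designCount {g : L → ZMod 2} {k s : ℕ} (hg : ∀ w, |walsh g w| = s)
    (hq : Fintype.card L = s ^ 2) (hk : 2 * k = Fintype.card L + s) {x y : L} (hxy : x ≠ y) :
    4 * designCount g k x y = Fintype.card L + 2 * s := by
  have hs : s ≠ 0 := by
    rintro rfl
    exact Fintype.card_ne_zero (hq.trans (zero_pow two_ne_zero))
  have hcount :
      (2 * s * (2 * 2) * designCount g k x y : ℤ) = 2 * Fintype.card L * (s + 2) := by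
    classical
    rw [designCount, Set.ncard_eq_toFinset_card', Set.toFinset_ofPred, natCast_card_filter,
      mul_sum, ← sum_walsh_indicator_product g s hxy]
    refine sum_congr rfl fun q _ => ?_
    have hW : signChar q.2 * walsh g q.1 = s ∨ signChar q.2 * walsh g q.1 = -s := by
      rw [← abs_eq (Nat.cast_nonneg s), abs_mul, abs_signChar, one_mul, hg]
    simp_rw [ncard_support_eq_iff hk, sum_signChar_add, mul_ite, mul_one, mul_zero]
    rw [← ite_zero_mul_ite_zero, ← ite_zero_mul_ite_zero,
      ite_eq_sub_of_eq_or_eq_neg (by omega) hW, ite_eq_one_sub_signChar, ite_eq_one_sub_signChar,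
      mul_assoc]
  rw [hq] at hcount ⊢
  push_cast at hcount
  have : (4 * designCount g k x y : ℤ) = s ^ 2 + 2 * s := by
    apply mul_left_cancel₀ (by positivity : (4 * s : ℤ) ≠ 0)
    linear_combination 2 * hcount
  exact_mod_cast this

end Design

section Code

variable {L : Type*} [Field L] [Algebra (ZMod 2) L] {ι : Type*} [Fintype ι]

local notation "Tr" => Algebra.trace (ZMod 2) L

def codeParam (f : ι → L → ZMod 2) :
    (ι → ZMod 2) × L × ZMod 2 →ₗ[ZMod 2] L → ZMod 2 where
  toFun p z := ∑ j, p.1 j * f j z + Tr (p.2.1 * z) + p.2.2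
  map_add' p q := by
    ext z
    simp only [Prod.fst_add, Prod.snd_add, Pi.add_apply, add_mul, sum_add_distrib, map_add]
    ring
  map_smul' r p := by
    ext z
    simp only [Prod.smul_fst, Prod.smul_snd, Pi.smul_apply, smul_mul_assoc, LinearMap.map_smul,
      smul_eq_mul, mul_assoc, ← mul_sum, RingHom.id_apply]
    ring

lemma codeParam_apply (f : ι → L → ZMod 2) (a : ι → ZMod 2) (w : L) (ε : ZMod 2) (z : L) :
    codeParam f (a, w, ε) z = ∑ j, a j * f j z + Tr (w * z) + ε := rfl

lemma range_codeParam (f : ι → L → ZMod 2) :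
    LinearMap.range (codeParam f) = Submodule.span (ZMod 2)
      (Set.range f ∪ Set.range (fun w z => Tr (w * z)) ∪ {fun _ => 1}) := by
  classical
  apply le_antisymm
  · rintro _ ⟨⟨a, w, ε⟩, rfl⟩
    have hdecomp : codeParam f (a, w, ε) =
        ∑ j, a j • f j + (fun z => Tr (w * z)) + ε • fun _ => 1 := by
      ext z
      simp [codeParam_apply]
    rw [hdecomp]
    refine add_mem (add_mem (sum_mem fun j _ => Submodule.smul_mem _ _ ?_) ?_)
      (Submodule.smul_mem _ _ ?_) <;> apply Submodule.subset_span <;> simp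
  · rw [Submodule.span_le]
    rintro _ ((⟨j, rfl⟩ | ⟨w, rfl⟩) | rfl)
    · exact ⟨(Pi.single j 1, 0, 0), by ext z; simp [codeParam_apply, Pi.single_apply]⟩
    · exact ⟨(0, w, 0), by ext z; simp [codeParam_apply]⟩
    · exact ⟨(0, 0, 1), by ext z; simp [codeParam_apply]⟩

lemma codeParam_injective [Fintype L] {f : ι → L → ZMod 2}
    (hf : ∀ a : ι → ZMod 2, a ≠ 0 → ∀ w,
      |walsh (fun z => ∑ j, a j * f j z) w| ≠ Fintype.card L) :
    Function.Injective (codeParam f) := by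
  rw [← LinearMap.ker_eq_bot, LinearMap.ker_eq_bot']
  rintro ⟨a, w, ε⟩ h
  have hconst : ∀ z, ∑ j, a j * f j z + Tr (w * z) = ε := fun z =>
    CharTwo.add_eq_zero.mp (congrFun h z)
  obtain rfl : a = 0 := by
    by_contra ha
    exact hf a ha w (abs_walsh_of_forall_add_eq hconst)
  obtain rfl : ε = 0 := by simpa using (hconst 0).symm
  obtain rfl : w = 0 := by
    by_contra hw
    obtain ⟨z, hz⟩ := Algebra.trace_surjective (ZMod 2) L 1
    simpa [mul_inv_cancel_left₀ hw, hz] using hconst (w⁻¹ * z)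
  rfl

lemma ncard_range_codeParam_eq_sum_designCount [Fintype L] [DecidableEq ι]
    {f : ι → L → ZMod 2} (hinj : Function.Injective (codeParam f)) (k : ℕ) (x y : L) :
    {c | c ∈ LinearMap.range (codeParam f) ∧ {z | c z ≠ 0}.ncard = k ∧
      c x = 1 ∧ c y = 1}.ncard =
      ∑ a : ι → ZMod 2, designCount (fun z => ∑ j, a j * f j z) k x y := by
  simp_rw [← SetLike.mem_coe, LinearMap.coe_range]
  rw [ncard_setOf_mem_range_and hinj, ncard_setOf_prod]
  rfl

theorem four_mul_ncard_weight_design [Fintype L] {f : ι → L → ZMod 2} {k s : ℕ}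
    (hq : Fintype.card L = s ^ 2) (hk : 2 * k = Fintype.card L + s)
    (hf : ∀ a : ι → ZMod 2, a ≠ 0 → ∀ w, |walsh (fun z => ∑ j, a j * f j z) w| = s)
    {x y : L} (hxy : x ≠ y) :
    4 * {c | c ∈ LinearMap.range (codeParam f) ∧ {z | c z ≠ 0}.ncard = k ∧
      c x = 1 ∧ c y = 1}.ncard =
      (2 ^ Fintype.card ι - 1) * (Fintype.card L + 2 * s) := by
  classical
  have hs : 1 < s := by
    have := Fintype.one_lt_card (α := L)
    nlinarith
  have hsq : s < Fintype.card L := hq ▸ lt_self_pow₀ hs one_lt_two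
  have hinj : Function.Injective (codeParam f) := codeParam_injective fun a ha w =>
    (hf a ha w).trans_ne (by exact_mod_cast hsq.ne)
  rw [ncard_range_codeParam_eq_sum_designCount hinj, mul_sum, ← add_sum_erase _ _ (mem_univ 0),
    sum_const_nat fun a ha => four_mul_designCount (hf a (ne_of_mem_erase ha)) hq hk hxy]
  simp only [Pi.zero_apply, zero_mul, sum_const_zero]
  rw [designCount_zero (by omega) hsq hk, mul_zero, zero_add, card_erase_of_mem (mem_univ _),
    card_univ, Fintype.card_fun, ZMod.card]

end Code

lemma card_galoisField_two {m : ℕ} (hm : m ≠ 0) :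
    Fintype.card (GaloisField 2 (2 * m)) = (2 ^ m) ^ 2 := by
  rw [Fintype.card_eq_nat_card, GaloisField.card 2 _ (by omega), ← pow_mul, mul_comm]

theorem stmt_2_general (m ℓ : ℕ) (hm : 2 ≤ m)
    (f : Fin ℓ → GaloisField 2 (2*m) → ZMod 2) (hf : IsBentVectorial m ℓ f) :
    ∀ x y : GaloisField 2 (2*m), x ≠ y →
      {c | c ∈ code m ℓ f ∧ wt m c = 2^(2*m-1) + 2^(m-1) ∧ c x = 1 ∧ c y = 1}.ncard =
        (2^ℓ - 1) * (2^(2*m-2) + 2^(m-1)) := by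
  intro x y hxy
  obtain ⟨n, rfl⟩ : ∃ n, m = n + 1 := ⟨m - 1, by omega⟩
  have hq := card_galoisField_two (by omega : n + 1 ≠ 0)
  have key := four_mul_ncard_weight_design (k := 2 ^ (2 * n + 1) + 2 ^ n) hq
    (by rw [hq]; ring)
    -- `IsBent m g` is `∀ w, |walsh g w| = 2 ^ m` unfolded
    (fun a ha w => by push_cast; exact hf a ha w) hxy
  rw [range_codeParam, Fintype.card_fin, hq] at key
  simp only [code, tr, wt, show 2 * (n + 1) - 1 = 2 * n + 1 by omega,
    show 2 * (n + 1) - 2 = 2 * n by omega, Nat.add_sub_cancel]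
  apply Nat.eq_of_mul_eq_mul_left (show 0 < 4 by norm_num)
  rw [key]
  ring

/-- the codewords of weight `2^(2m-1) + 2^(m-1)` of
`C(f_1, …, f_ℓ)` hold a
`2-(2^(2m), 2^(2m-1) + 2^(m-1), (2^ℓ-1)(2^(2m-2) + 2^(m-1)))` design. -/
theorem stmt_2 (m ℓ : ℕ) (hm : 2 ≤ m) (hℓ1 : 1 ≤ ℓ) (hℓm : ℓ ≤ m)
    (f : Fin ℓ → GaloisField 2 (2*m) → ZMod 2) (hf : IsBentVectorial m ℓ f) :
    ∀ x y : GaloisField 2 (2*m), x ≠ y →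
      {c | c ∈ code m ℓ f ∧ wt m c = 2^(2*m-1) + 2^(m-1) ∧ c x = 1 ∧ c y = 1}.ncard =
        (2^ℓ - 1) * (2^(2*m-2) + 2^(m-1)) :=
  stmt_2_general m ℓ hm f hf
end
end

section
/- Let m ≥ 2, 2 ≤ ℓ ≤ m, and let (f_1, …, f_ℓ) be a (2m, ℓ) bent vectorial function on GF(2^{2m}). Then for any two distinct codewords u, v of C(f_1, …, f_ℓ) of Hamming weight 2^{2m−1} − 2^{m−1}, the cardinality of the intersection of the supports of u and v is one of the three values 2^{2m−2} − 2^{m−2}, 2^{2m−2} − 2^{m−1}, or 2^{2m−2} − 3·2^{m−2}. -/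
noncomputable section

/-!
Let `c = u + v`, a nonzero codeword. Writing `c = ∑ aⱼ fⱼ + Tr(w·) + ε`, its Walsh sum
`∑ₓ (-1)^c(x)` is `±2^m` when `a ≠ 0` (bentness of `∑ aⱼ fⱼ`) and `0` when `a = 0, w ≠ 0`
(a nontrivial additive character sums to zero); `a = 0, w = 0` would make `c` the all-one
vector, which is too heavy. Hence `wt c ∈ {2^(2m-1) - 2^(m-1), 2^(2m-1), 2^(2m-1) + 2^(m-1)}`,
and `wt (u + v) = wt u + wt v - 2 |supp u ∩ supp v|` turns these three weights into the
three intersection sizes.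
-/

open Finset

theorem zmod_two_eq_zero_or_one (a : ZMod 2) : a = 0 ∨ a = 1 := by
  decide +revert

theorem neg_one_pow_val_add (a b : ZMod 2) :
    (-1 : ℤ) ^ (a + b).val = (-1) ^ a.val * (-1) ^ b.val := by
  decide +revert

theorem sum_neg_one_pow_val {α : Type*} [Fintype α] (g : α → ZMod 2) :
    ∑ x, (-1 : ℤ) ^ (g x).val = Fintype.card α - 2 * {x | g x ≠ 0}.ncard := by
  classical
  have hval : ∀ a : ZMod 2, (-1 : ℤ) ^ a.val = 1 - 2 * if a ≠ 0 then 1 else 0 := by decide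
  simp_rw [hval, sum_sub_distrib, ← mul_sum, sum_boole, Set.ncard_eq_toFinset_card']
  simp

theorem sum_neg_one_pow_val_eq_zero {G : Type*} [AddCommGroup G] [Fintype G]
    (φ : G →+ ZMod 2) (hφ : φ ≠ 0) : ∑ x, (-1 : ℤ) ^ (φ x).val = 0 := by
  obtain ⟨z, hz⟩ : ∃ z, φ z = 1 := by
    obtain ⟨z, hz⟩ := DFunLike.ne_iff.mp hφ
    exact ⟨z, (zmod_two_eq_zero_or_one _).resolve_left hz⟩
  have hshift : ∑ x, (-1 : ℤ) ^ (φ x).val = -∑ x, (-1 : ℤ) ^ (φ x).val := by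
    calc ∑ x, (-1 : ℤ) ^ (φ x).val = ∑ x, (-1 : ℤ) ^ (φ (x + z)).val :=
          (Equiv.sum_comp (Equiv.addRight z) _).symm
      _ = -∑ x, (-1 : ℤ) ^ (φ x).val := by
          simp [map_add, neg_one_pow_val_add, hz, ZMod.val_one]
  linarith

theorem ncard_setOf_add_ne_zero {α : Type*} [Finite α] (u v : α → ZMod 2) :
    {x | (u + v) x ≠ 0}.ncard + 2 * ({x | u x ≠ 0} ∩ {x | v x ≠ 0}).ncard =
      {x | u x ≠ 0}.ncard + {x | v x ≠ 0}.ncard := by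
  have hsymm : {x | (u + v) x ≠ 0} =
      ({x | u x ≠ 0} ∪ {x | v x ≠ 0}) \ ({x | u x ≠ 0} ∩ {x | v x ≠ 0}) := by
    ext x
    simp only [Set.mem_ofPred_eq, Set.mem_sdiff, Set.mem_union, Set.mem_inter_iff, Pi.add_apply]
    generalize u x = a; generalize v x = b
    decide +revert
  rw [hsymm, ← Set.ncard_union_add_ncard_inter,
    ← Set.ncard_sdiff_add_ncard_of_subset (Set.inter_subset_left.trans Set.subset_union_left)]
  ring

theorem tr_smul_mul (m : ℕ) (r : ZMod 2) (w x : GaloisField 2 (2*m)) :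
    tr m ((r • w) * x) = r * tr m (w * x) := by
  rw [tr, tr, smul_mul_assoc, map_smul, smul_eq_mul]

theorem exists_eq_of_mem_code {m ℓ : ℕ} {f : Fin ℓ → GaloisField 2 (2*m) → ZMod 2}
    {c : GaloisField 2 (2*m) → ZMod 2} (hc : c ∈ code m ℓ f) :
    ∃ (a : Fin ℓ → ZMod 2) (w : GaloisField 2 (2*m)) (ε : ZMod 2),
      c = fun x => ∑ j, a j * f j x + tr m (w * x) + ε := by
  induction hc using Submodule.span_induction with
  | mem g hg =>
    rcases hg with (⟨j, rfl⟩ | ⟨w, rfl⟩) | rfl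
    · exact ⟨Pi.single j 1, 0, 0, by ext; simp [tr, Pi.single_apply]⟩
    · exact ⟨0, w, 0, by ext; simp⟩
    · exact ⟨0, 0, 1, by ext; simp [tr]⟩
  | zero => exact ⟨0, 0, 0, by ext; simp [tr]⟩
  | add c d _ _ hc hd =>
    obtain ⟨a, w, ε, rfl⟩ := hc
    obtain ⟨a', w', ε', rfl⟩ := hd
    refine ⟨a + a', w + w', ε + ε', ?_⟩
    ext x
    simp only [Pi.add_apply, add_mul, tr, map_add, sum_add_distrib]
    ring
  | smul r c _ hc =>
    obtain ⟨a, w, ε, rfl⟩ := hc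
    refine ⟨r • a, r • w, r * ε, ?_⟩
    ext x
    simp only [Pi.smul_apply, smul_eq_mul, tr_smul_mul, mul_assoc, ← mul_sum]
    ring

theorem exists_tr_ne_zero (m : ℕ) : ∃ y : GaloisField 2 (2*m), tr m y ≠ 0 := by
  by_contra! h
  exact Algebra.trace_ne_zero (ZMod 2) (GaloisField 2 (2*m)) (LinearMap.ext h)

theorem sum_neg_one_pow_val_tr_mul {m : ℕ} {w : GaloisField 2 (2*m)} (hw : w ≠ 0) :
    ∑ x, (-1 : ℤ) ^ (tr m (w * x)).val = 0 := by
  obtain ⟨y, hy⟩ := exists_tr_ne_zero m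
  refine sum_neg_one_pow_val_eq_zero
    ((Algebra.trace (ZMod 2) _).toAddMonoidHom.comp (AddMonoidHom.mulLeft w)) ?_
  intro h
  apply hy
  simpa [tr, mul_inv_cancel_left₀ hw] using DFunLike.congr_fun h (w⁻¹ * y)

theorem sum_neg_one_pow_val_of_mem_code {m ℓ : ℕ} {f : Fin ℓ → GaloisField 2 (2*m) → ZMod 2}
    (hf : IsBentVectorial m ℓ f) {c : GaloisField 2 (2*m) → ZMod 2} (hc : c ∈ code m ℓ f)
    (hc0 : c ≠ 0) (hc1 : c ≠ 1) :
    |∑ x, (-1 : ℤ) ^ (c x).val| = 2 ^ m ∨ ∑ x, (-1 : ℤ) ^ (c x).val = 0 := by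
  obtain ⟨a, w, ε, rfl⟩ := exists_eq_of_mem_code hc
  have hsplit : ∑ x, (-1 : ℤ) ^ (∑ j, a j * f j x + tr m (w * x) + ε).val =
      (-1) ^ ε.val * ∑ x, (-1 : ℤ) ^ (∑ j, a j * f j x + tr m (w * x)).val := by
    rw [mul_sum]
    exact sum_congr rfl fun x _ => by rw [neg_one_pow_val_add, mul_comm]
  rw [hsplit]
  by_cases ha : a = 0
  · subst ha
    by_cases hw : w = 0
    · subst hw
      exfalso
      obtain rfl | rfl := zmod_two_eq_zero_or_one ε
      · exact hc0 (funext fun x => by simp [tr])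
      · exact hc1 (funext fun x => by simp [tr])
    · right
      simp [sum_neg_one_pow_val_tr_mul hw]
  · left
    rw [abs_mul, hf a ha w]
    simp

theorem intersection_card_cases (m W I : ℕ) (hm : 2 ≤ m)
    (hW : |(2 ^ (2*m) : ℤ) - 2 * W| = 2 ^ m ∨ (2 ^ (2*m) : ℤ) - 2 * W = 0)
    (hI : W + 2 * I = 2 * (2 ^ (2*m-1) - 2 ^ (m-1))) :
    I = 2^(2*m-2) - 2^(m-2) ∨ I = 2^(2*m-2) - 2^(m-1) ∨ I = 2^(2*m-2) - 3 * 2^(m-2) := by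
  obtain ⟨k, rfl⟩ : ∃ k, m = k + 2 := ⟨m - 2, by omega⟩
  have e1 : 2 * (k + 2) - 1 = 2 * k + 3 := by omega
  have e2 : 2 * (k + 2) - 2 = 2 * k + 2 := by omega
  simp only [e1, e2, Nat.add_sub_cancel, show k + 2 - 1 = k + 1 by omega] at hI ⊢
  have p1 : (2 : ℕ) ^ (2 * k + 3) = 8 * (2 ^ k * 2 ^ k) := by ring
  have p2 : (2 : ℕ) ^ (2 * k + 2) = 4 * (2 ^ k * 2 ^ k) := by ring
  have p3 : (2 : ℤ) ^ (2 * (k + 2)) = 16 * ((2 ^ k * 2 ^ k : ℕ) : ℤ) := by push_cast; ring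
  have p4 : (2 : ℤ) ^ (k + 2) = 4 * ((2 ^ k : ℕ) : ℤ) := by push_cast; ring
  have hle : 2 ^ k ≤ 2 ^ k * 2 ^ k := Nat.le_mul_of_pos_left _ (Nat.two_pow_pos k)
  rw [p1, pow_succ] at hI
  rw [p2, pow_succ]
  rw [p3, p4, abs_eq (by positivity)] at hW
  generalize 2 ^ k * 2 ^ k = T at *
  generalize 2 ^ k = t at *
  omega

theorem stmt_7_general (m ℓ : ℕ) (hm : 2 ≤ m)
    (f : Fin ℓ → GaloisField 2 (2*m) → ZMod 2) (hf : IsBentVectorial m ℓ f)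
    (u v : GaloisField 2 (2*m) → ZMod 2)
    (hu : u ∈ code m ℓ f) (hv : v ∈ code m ℓ f)
    (hwu : wt m u = 2^(2*m-1) - 2^(m-1)) (hwv : wt m v = 2^(2*m-1) - 2^(m-1))
    (huv : u ≠ v) :
    (supp m u ∩ supp m v).ncard = 2^(2*m-2) - 2^(m-2) ∨
    (supp m u ∩ supp m v).ncard = 2^(2*m-2) - 2^(m-1) ∨
    (supp m u ∩ supp m v).ncard = 2^(2*m-2) - 3 * 2^(m-2) := by
  have hcard : Fintype.card (GaloisField 2 (2*m)) = 2 ^ (2*m) := by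
    rw [← Nat.card_eq_fintype_card, GaloisField.card 2 (2*m) (by omega)]
  have hinter : wt m (u + v) + 2 * (supp m u ∩ supp m v).ncard = wt m u + wt m v :=
    ncard_setOf_add_ne_zero u v
  have hne0 : u + v ≠ 0 := fun h => huv (sub_eq_zero.mp (by rwa [ZModModule.sub_eq_add]))
  have hne1 : u + v ≠ 1 := by
    intro h
    have hfull : wt m (u + v) = 2 ^ (2*m) := by
      rw [wt, h]
      simp [Set.ncard_univ, hcard]
    have hhalf : 2 ^ (2*m) = 2 * 2 ^ (2*m-1) := by rw [← pow_succ']; congr 1; omega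
    have hpos := Nat.one_le_two_pow (n := m - 1)
    have hpos' := Nat.one_le_two_pow (n := 2 * m - 1)
    rw [hfull, hhalf, hwu, hwv] at hinter
    omega
  have hW := sum_neg_one_pow_val_of_mem_code hf (add_mem hu hv) hne0 hne1
  rw [sum_neg_one_pow_val, hcard] at hW
  exact intersection_card_cases m (wt m (u + v)) _ hm (by exact_mod_cast hW)
    (hinter.trans (by rw [hwu, hwv]; ring))

/-- for `2 ≤ ℓ ≤ m`, the supports of two distinct minimum
weight codewords of `C(f_1, …, f_ℓ)` intersect in one of three sizes. -/
theorem stmt_7 (m ℓ : ℕ) (hm : 2 ≤ m) (hℓ1 : 2 ≤ ℓ) (hℓm : ℓ ≤ m)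
    (f : Fin ℓ → GaloisField 2 (2*m) → ZMod 2) (hf : IsBentVectorial m ℓ f)
    (u v : GaloisField 2 (2*m) → ZMod 2)
    (hu : u ∈ code m ℓ f) (hv : v ∈ code m ℓ f)
    (hwu : wt m u = 2^(2*m-1) - 2^(m-1)) (hwv : wt m v = 2^(2*m-1) - 2^(m-1))
    (huv : u ≠ v) :
    (supp m u ∩ supp m v).ncard = 2^(2*m-2) - 2^(m-2) ∨
    (supp m u ∩ supp m v).ncard = 2^(2*m-2) - 2^(m-1) ∨
    (supp m u ∩ supp m v).ncard = 2^(2*m-2) - 3 * 2^(m-2) :=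
  stmt_7_general m ℓ hm f hf u v hu hv hwu hwv huv
end
end

section
/- Let m ≥ 2, 1 ≤ ℓ ≤ m, and let (f_1, …, f_ℓ) be a (2m, ℓ) bent vectorial function on GF(2^{2m}). Then for any two distinct elements x, y of GF(2^{2m}), the number of codewords c of C(f_1, …, f_ℓ) with c_x = 1 and c_y = 1 is exactly 2^{2m+ℓ−1}. -/
noncomputable section

set_option synthInstance.maxHeartbeats 1000000 in
instance (n : ℕ) : Algebra.IsSeparable (ZMod 2) (GaloisField 2 n) :=
  IsGalois.to_isSeparable

def Phi (m ℓ : ℕ) (f : Fin ℓ → GaloisField 2 (2*m) → ZMod 2) :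
    ((Fin ℓ → ZMod 2) × GaloisField 2 (2*m) × ZMod 2) →ₗ[ZMod 2]
      (GaloisField 2 (2*m) → ZMod 2) where
  toFun p := fun x => (∑ j, p.1 j * f j x) + tr m (p.2.1 * x) + p.2.2
  map_add' p q := by
    funext x
    simp only [Prod.fst_add, Prod.snd_add, Pi.add_apply, tr, add_mul, map_add,
      Finset.sum_add_distrib]
    ring
  map_smul' c p := by
    funext x
    simp only [Prod.smul_fst, Prod.smul_snd, Pi.smul_apply, smul_eq_mul, tr,
      smul_mul_assoc, map_smul, RingHom.id_apply]
    rw [mul_add, mul_add, Finset.mul_sum]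
    ring

lemma Phi_apply (m ℓ : ℕ) (f : Fin ℓ → GaloisField 2 (2*m) → ZMod 2)
    (p : (Fin ℓ → ZMod 2) × GaloisField 2 (2*m) × ZMod 2) (x : GaloisField 2 (2*m)) :
    Phi m ℓ f p x = (∑ j, p.1 j * f j x) + tr m (p.2.1 * x) + p.2.2 := rfl

lemma code_eq_range (m ℓ : ℕ) (f : Fin ℓ → GaloisField 2 (2*m) → ZMod 2) :
    code m ℓ f = LinearMap.range (Phi m ℓ f) := by
  apply le_antisymm
  · rw [code, Submodule.span_le]
    rintro c ((⟨j, rfl⟩ | ⟨w, rfl⟩) | rfl)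
    · exact ⟨(Pi.single j 1, 0, 0), by
        funext x
        simp [Phi_apply, Pi.single_apply, tr, Finset.sum_ite_eq']⟩
    · exact ⟨(0, w, 0), by funext x; simp [Phi_apply]⟩
    · exact ⟨(0, 0, 1), by funext x; simp [Phi_apply, tr]⟩
  · rintro c ⟨p, rfl⟩
    have h1 : ∀ j, f j ∈ code m ℓ f := fun j =>
      Submodule.subset_span (Or.inl (Or.inl ⟨j, rfl⟩))
    have h2 : (fun x => tr m (p.2.1 * x)) ∈ code m ℓ f :=
      Submodule.subset_span (Or.inl (Or.inr ⟨p.2.1, rfl⟩))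
    have h3 : (fun _ => (1 : ZMod 2)) ∈ code m ℓ f :=
      Submodule.subset_span (Or.inr rfl)
    have : Phi m ℓ f p = (∑ j, p.1 j • f j) +
        ((fun x => tr m (p.2.1 * x)) + p.2.2 • (fun _ => (1 : ZMod 2))) := by
      funext x
      simp [Phi_apply, Finset.sum_apply, add_assoc]
    rw [this]
    exact Submodule.add_mem _ (Submodule.sum_mem _ fun j _ => Submodule.smul_mem _ _ (h1 j))
      (Submodule.add_mem _ h2 (Submodule.smul_mem _ _ h3))

lemma Phi_inj (m ℓ : ℕ) (hm : 2 ≤ m) (f : Fin ℓ → GaloisField 2 (2*m) → ZMod 2)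
    (hf : IsBentVectorial m ℓ f) : Function.Injective (Phi m ℓ f) := by
  have hεε : ∀ ε : ZMod 2, ε + ε = 0 := by decide
  have hcard : Fintype.card (GaloisField 2 (2*m)) = 2^(2*m) := by
    rw [← Nat.card_eq_fintype_card]; exact GaloisField.card 2 (2*m) (by omega)
  rw [← LinearMap.ker_eq_bot, LinearMap.ker_eq_bot']
  rintro ⟨a, w, ε⟩ hp
  by_cases ha : a = 0
  · subst ha
    have hε : ε = 0 := by
      have := congr_fun hp 0
      simpa [Phi_apply, tr] using this
    subst hε
    have hw : w = 0 := by
      by_contra hw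
      obtain ⟨z, hz⟩ := DFunLike.ne_iff.mp (Algebra.trace_ne_zero (ZMod 2) (GaloisField 2 (2*m)))
      have := congr_fun hp (w⁻¹ * z)
      rw [Phi_apply] at this
      simp only [Pi.zero_apply, Finset.sum_const_zero, zero_mul, add_zero, zero_add,
        Pi.zero_apply] at this
      rw [← mul_assoc, mul_inv_cancel₀ hw, one_mul] at this
      exact hz (by simpa [tr] using this)
    simp [hw]
  · exfalso
    have hb := hf a ha w
    have key : ∀ x, (∑ j, a j * f j x) + tr m (w * x) = ε := by
      intro x
      have h := congr_fun hp x
      rw [Phi_apply] at h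
      simp only [Pi.zero_apply] at h
      linear_combination h - hεε ε
    rw [show (∑ x : GaloisField 2 (2*m), (-1 : ℤ) ^ (((fun x => ∑ j, a j * f j x) x + tr m (w * x)).val))
        = ∑ x : GaloisField 2 (2*m), (-1 : ℤ) ^ ε.val from
      Finset.sum_congr rfl fun x _ => by rw [key x]] at hb
    rw [Finset.sum_const, Finset.card_univ, hcard] at hb
    have hv : ε.val = 0 ∨ ε.val = 1 := by
      have := ZMod.val_lt ε; omega
    have : 2*m = m := by
      rcases hv with h | h <;> simp [h, nsmul_eq_mul, abs_of_nonneg] at hb <;>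
        exact_mod_cast hb
    omega


set_option maxHeartbeats 1000000 in
/-- for any two distinct coordinates `x, y`, exactly
`2^(2m+ℓ-1)` codewords of `C(f_1, …, f_ℓ)` have a `1` in both positions. -/
theorem stmt_13 (m ℓ : ℕ) (hm : 2 ≤ m) (hℓ1 : 1 ≤ ℓ) (hℓm : ℓ ≤ m)
    (f : Fin ℓ → GaloisField 2 (2*m) → ZMod 2) (hf : IsBentVectorial m ℓ f) :
    ∀ x y : GaloisField 2 (2*m), x ≠ y →
      {c | c ∈ code m ℓ f ∧ c x = 1 ∧ c y = 1}.ncard = 2^(2*m+ℓ-1) := by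
  intro x y hxy
  classical
  have h2 : (2 : ZMod 2) = 0 := rfl
  set D := ((Fin ℓ → ZMod 2) × GaloisField 2 (2*m) × ZMod 2) with hD_def
  let π : (GaloisField 2 (2*m) → ZMod 2) →ₗ[ZMod 2] ZMod 2 × ZMod 2 :=
    (LinearMap.proj x).prod (LinearMap.proj y)
  let ψ : D →ₗ[ZMod 2] ZMod 2 × ZMod 2 := π.comp (Phi m ℓ f)
  have hψ : ∀ p, ψ p = (Phi m ℓ f p x, Phi m ℓ f p y) := fun p => rfl
  -- a w separating x and y
  obtain ⟨z0, hz0⟩ : ∃ z, tr m z ≠ 0 := by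
    obtain ⟨z, hz⟩ := DFunLike.ne_iff.mp (Algebra.trace_ne_zero (ZMod 2) (GaloisField 2 (2*m)))
    exact ⟨z, by simpa [tr] using hz⟩
  have hxy' : x - y ≠ 0 := sub_ne_zero.mpr hxy
  set w : GaloisField 2 (2*m) := z0 * (x - y)⁻¹ with hw_def
  have hw : tr m (w*x) ≠ tr m (w*y) := by
    intro h
    apply hz0
    have hz : w * x - w * y = z0 := by
      rw [← mul_sub, hw_def, mul_assoc, inv_mul_cancel₀ hxy', mul_one]
    have : tr m (w*x) - tr m (w*y) = tr m z0 := by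
      rw [← hz, tr, tr, tr, ← map_sub]
    rw [h, sub_self] at this
    exact this.symm
  have htr_smul : ∀ (c : ZMod 2) (a : GaloisField 2 (2*m)), tr m (c • a) = c * tr m a := by
    intro c a
    rw [tr, tr, map_smul, smul_eq_mul]
  have hu : tr m (w*y) = tr m (w*x) + 1 := by
    have : ∀ b c : ZMod 2, b ≠ c → c = b + 1 := by decide
    exact this _ _ hw
  have hsurj : Function.Surjective ψ := by
    intro v
    refine ⟨((0 : Fin ℓ → ZMod 2), (v.1+v.2) • w, v.1 - (v.1+v.2) * tr m (w*x)), ?_⟩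
    rw [hψ]
    have e1 : Phi m ℓ f ((0 : Fin ℓ → ZMod 2), (v.1+v.2) • w, v.1 - (v.1+v.2) * tr m (w*x)) x
        = (v.1+v.2) * tr m (w*x) + (v.1 - (v.1+v.2) * tr m (w*x)) := by
      rw [Phi_apply]
      simp [smul_mul_assoc, htr_smul]
    have e2 : Phi m ℓ f ((0 : Fin ℓ → ZMod 2), (v.1+v.2) • w, v.1 - (v.1+v.2) * tr m (w*x)) y
        = (v.1+v.2) * tr m (w*y) + (v.1 - (v.1+v.2) * tr m (w*x)) := by
      rw [Phi_apply]
      simp [smul_mul_assoc, htr_smul]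
    rw [e1, e2, hu]
    ext
    · simp only; ring
    · simp only; linear_combination v.1 * h2
  -- cardinalities
  have hF : Fintype.card (GaloisField 2 (2*m)) = 2^(2*m) := by
    rw [← Nat.card_eq_fintype_card]; exact GaloisField.card 2 (2*m) (by omega)
  have hD : Nat.card D = 2^(2*m+ℓ+1) := by
    rw [Nat.card_eq_fintype_card]
    rw [Fintype.card_prod, Fintype.card_prod, Fintype.card_fun, ZMod.card, Fintype.card_fin, hF]
    rw [show 2*m+ℓ+1 = ℓ + (2*m + 1) by ring, pow_add, pow_succ]
  set H := AddMonoidHom.ker ψ.toAddMonoidHom with hH_def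
  have hq : Nat.card D = 4 * Nat.card H := by
    rw [AddSubgroup.card_eq_card_quotient_mul_card_addSubgroup H]
    congr 1
    rw [Nat.card_congr (QuotientAddGroup.quotientKerEquivOfSurjective ψ.toAddMonoidHom
      hsurj).toEquiv]
    simp [Nat.card_eq_fintype_card]
  have hpow : (2:ℕ)^(2*m+ℓ+1) = 4 * 2^(2*m+ℓ-1) := by
    rw [show 2*m+ℓ+1 = (2*m+ℓ-1)+2 by omega, pow_add]
    ring
  have hK : Nat.card H = 2^(2*m+ℓ-1) := by omega
  -- the set as an image
  have hinj : Function.Injective (Phi m ℓ f) := Phi_inj m ℓ hm f hf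
  have hp₀ : ψ ((0 : Fin ℓ → ZMod 2), (0 : GaloisField 2 (2*m)), (1 : ZMod 2)) = (1,1) := by
    rw [hψ]
    rw [Phi_apply, Phi_apply]
    simp [tr]
  set p₀ : D := ((0 : Fin ℓ → ZMod 2), (0 : GaloisField 2 (2*m)), (1 : ZMod 2)) with hp₀_def
  have hset : {c | c ∈ code m ℓ f ∧ c x = 1 ∧ c y = 1} = Phi m ℓ f '' {p | ψ p = (1,1)} := by
    ext c
    simp only [Set.mem_setOf_eq, Set.mem_image, code_eq_range, LinearMap.mem_range]
    constructor
    · rintro ⟨⟨p, rfl⟩, h1, h2⟩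
      exact ⟨p, by rw [hψ, h1, h2], rfl⟩
    · rintro ⟨p, hp, rfl⟩
      rw [hψ] at hp
      exact ⟨⟨p, rfl⟩, congrArg Prod.fst hp, congrArg Prod.snd hp⟩
  have hT : {p | ψ p = (1,1)} = (fun k => p₀ + k) '' {p | ψ p = 0} := by
    ext p
    simp only [Set.mem_setOf_eq, Set.mem_image]
    constructor
    · intro hp
      exact ⟨p - p₀, by rw [map_sub, hp, hp₀, sub_self], by rw [add_sub_cancel]⟩
    · rintro ⟨k, hk, rfl⟩
      rw [map_add, hp₀, hk, add_zero]
  rw [hset, Set.ncard_image_of_injective _ hinj, hT,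
    Set.ncard_image_of_injective _ (add_right_injective p₀), ← Nat.card_coe_set_eq]
  rw [← hK]
  exact Nat.card_congr (Equiv.subtypeEquivRight fun p => (AddMonoidHom.mem_ker (f := ψ.toAddMonoidHom)).symm)
end
end
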